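/- arXiv:1908.04560 — 7 statements merged into one kernel-verified Lean document; each statement's English description precedes it below -/
import Mathlib

section
/- Let s and positive integers N₁ ≥ N₂ ≥ ⋯ ≥ Nₘ ≥ 2 be given, and let τ(s) be the number of tuples (d₁,…,dₘ) with 1 ≤ dᵢ ≤ Nᵢ and ∏ dᵢ = s. Suppose s > 1 is a perfect square and not prime, and let K be the number of indices i with s ≤ Nᵢ. Then τ(s) ≥ K + K(K−1)/2. -/
/-!
Write `s = t * t` with `t ≥ 2`. Every unordered pair `{i, j}` of indices with `s ≤ Nᵢ, Nⱼ` yields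
the factorization of `s` with `t` in positions `i` and `j` (read as `t * t = s` in position `i`
when `i = j`) and `1` elsewhere. Distinct pairs give tuples with distinct supports, so `τ(s)` is at
least the number `K + K(K-1)/2` of unordered pairs, diagonal ones included.
-/

section
variable {ι M : Type*} [DecidableEq ι] [CommMonoid M]

def sym2MulSingle (t : M) : Sym2 ι → ι → M :=
  Sym2.lift ⟨fun i j => Pi.mulSingle i t * Pi.mulSingle j t, fun _ _ => mul_comm _ _⟩

@[simp]
theorem sym2MulSingle_mk (t : M) (i j : ι) :
    sym2MulSingle t s(i, j) = Pi.mulSingle i t * Pi.mulSingle j t := rfl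

theorem prod_sym2MulSingle [Fintype ι] (t : M) (z : Sym2 ι) :
    ∏ k, sym2MulSingle t z k = t * t := by
  induction z using Sym2.ind with
  | _ i j => simp [Finset.prod_mul_distrib]

theorem sym2MulSingle_apply_of_notMem (t : M) {z : Sym2 ι} {k : ι} (hk : k ∉ z) :
    sym2MulSingle t z k = 1 := by
  induction z using Sym2.ind with
  | _ i j =>
    obtain ⟨hki, hkj⟩ : k ≠ i ∧ k ≠ j := by simpa [not_or] using hk
    simp [hki, hkj]

theorem mulSupport_sym2MulSingle {t : M} (ht : t ≠ 1) (ht2 : t * t ≠ 1)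
    (z : Sym2 ι) : Function.mulSupport (sym2MulSingle t z) = {k | k ∈ z} := by
  induction z using Sym2.ind with
  | _ i j =>
    ext k
    by_cases hki : k = i <;> by_cases hkj : k = j <;> simp_all

theorem sym2MulSingle_injective {t : M} (ht : t ≠ 1) (ht2 : t * t ≠ 1) :
    Function.Injective (sym2MulSingle (ι := ι) t) := by
  intro z w h
  have hsupp := congrArg Function.mulSupport h
  rw [mulSupport_sym2MulSingle ht ht2, mulSupport_sym2MulSingle ht ht2] at hsupp
  exact Sym2.ext fun k => Set.ext_iff.mp hsupp k

theorem sym2MulSingle_mem_Icc {t : ℕ} (ht : 1 ≤ t) (z : Sym2 ι) (k : ι) :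
    sym2MulSingle t z k ∈ Set.Icc 1 (t * t) := by
  induction z using Sym2.ind with
  | _ i j =>
    have hsingle : ∀ l : ι, (Pi.mulSingle l t : ι → ℕ) k ∈ Set.Icc 1 t := fun l => by
      by_cases hkl : k = l <;> simp_all
    simpa using Set.Icc_mul_Icc_subset' 1 t 1 t (Set.mul_mem_mul (hsingle i) (hsingle j))
end

theorem stmt3_general (m : ℕ) (N : Fin m → ℕ) (hN : ∀ i, 2 ≤ N i) (s : ℕ) (hs : 1 < s)
    (hsq : IsSquare s) :
    Nat.card {i : Fin m // s ≤ N i} +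
      Nat.card {i : Fin m // s ≤ N i} * (Nat.card {i : Fin m // s ≤ N i} - 1) / 2 ≤
    Nat.card {d : Fin m → ℕ // (∀ i, 1 ≤ d i ∧ d i ≤ N i) ∧ ∏ i, d i = s} := by
  obtain ⟨t, rfl⟩ := hsq
  have ht : 2 ≤ t := by nlinarith
  set S := {i : Fin m // t * t ≤ N i}
  have : Finite {d : Fin m → ℕ // (∀ i, 1 ≤ d i ∧ d i ≤ N i) ∧ ∏ i, d i = t * t} :=
    ((Set.finite_Iic N).subset fun d hd i => (hd.1 i).2).to_subtype
  have hbounds (z : Sym2 S) (k : Fin m) :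
      1 ≤ sym2MulSingle t (z.map Subtype.val) k ∧ sym2MulSingle t (z.map Subtype.val) k ≤ N k := by
    obtain ⟨hlo, hhi⟩ := sym2MulSingle_mem_Icc (t := t) (by omega) (z.map Subtype.val) k
    refine ⟨hlo, ?_⟩
    by_cases hk : k ∈ z.map Subtype.val
    · obtain ⟨i, -, rfl⟩ := Sym2.mem_map.mp hk
      exact hhi.trans i.2
    · rw [sym2MulSingle_apply_of_notMem t hk]
      exact one_le_two.trans (hN k)
  let f (z : Sym2 S) : {d : Fin m → ℕ // (∀ i, 1 ≤ d i ∧ d i ≤ N i) ∧ ∏ i, d i = t * t} :=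
    ⟨sym2MulSingle t (z.map Subtype.val), hbounds z, prod_sym2MulSingle t _⟩
  have hf : Function.Injective f := fun z w h =>
    Sym2.map.injective Subtype.val_injective <|
      sym2MulSingle_injective (t := t) (by omega) (by nlinarith) (congrArg Subtype.val h)
  calc _ = (Nat.card S + 1).choose 2 := by
        rw [Nat.choose_succ_succ, Nat.choose_one_right, Nat.choose_two_right]
    _ = Nat.card (Sym2 S) := by
        rw [Nat.card_eq_fintype_card, Nat.card_eq_fintype_card, Sym2.card]
    _ ≤ _ := Nat.card_le_card_of_injective f hf

/-- if `s > 1` is a composite perfect square then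
`τ(s) ≥ K + K(K-1)/2` where `K` is the number of indices with `s ≤ Nᵢ`. -/
theorem stmt3 (m : ℕ) (N : Fin m → ℕ) (hN : ∀ i, 2 ≤ N i)
    (hmono : ∀ i j : Fin m, i ≤ j → N j ≤ N i) (s : ℕ) (hs : 1 < s)
    (hnp : ¬ s.Prime) (hsq : IsSquare s) :
    Nat.card {i : Fin m // s ≤ N i} +
      Nat.card {i : Fin m // s ≤ N i} * (Nat.card {i : Fin m // s ≤ N i} - 1) / 2 ≤
    Nat.card {d : Fin m → ℕ // (∀ i, 1 ≤ d i ∧ d i ≤ N i) ∧ ∏ i, d i = s} :=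
  stmt3_general m N hN s hs hsq
end

section
/- Let s and positive integers N₁ ≥ N₂ ≥ ⋯ ≥ Nₘ ≥ 2 be given, and let τ(s) be the number of tuples (d₁,…,dₘ) with 1 ≤ dᵢ ≤ Nᵢ and ∏ dᵢ = s. Suppose s > 1 is composite and not a perfect square, and let K be the number of indices i with s ≤ Nᵢ. Then τ(s) ≥ K². -/
/-!
Write `s = a * b` with `1 < a`, `1 < b` and `a ≠ b`, which is possible because `s` is composite
and not a square. For indices `i, j` with `s ≤ Nᵢ` and `s ≤ Nⱼ`, put `a` in slot `i` and `b` in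
slot `j` (so `s` itself in slot `i` when `i = j`) and `1` everywhere else. This is an admissible
factorization of `s`, and `(i, j)` can be read off from it because `1`, `a`, `b`, `s` are pairwise
distinct, so these `K²` factorizations are all different.
-/

theorem Nat.exists_mul_eq_of_not_prime_of_not_isSquare {s : ℕ} (hs : 1 < s) (hnp : ¬ s.Prime)
    (hsq : ¬ IsSquare s) : ∃ a b, 1 < a ∧ 1 < b ∧ a ≠ b ∧ a * b = s := by
  obtain ⟨a, b, has, hbs, rfl⟩ := (Nat.not_prime_iff_exists_mul_eq hs).1 hnp
  refine ⟨a, b, ?_, ?_, fun hab => hsq ⟨a, by rw [hab]⟩, rfl⟩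
  · by_contra! ha
    interval_cases a <;> simp_all
  · by_contra! hb
    interval_cases b <;> simp_all

theorem Pi.mulSingle_mul_mulSingle_injective {ι : Type*} [DecidableEq ι] {a b : ℕ}
    (ha : 1 < a) (hb : 1 < b) (hab : a ≠ b) :
    Function.Injective fun p : ι × ι => (Pi.mulSingle p.1 a * Pi.mulSingle p.2 b : ι → ℕ) := by
  rintro ⟨i, j⟩ ⟨i', j'⟩ h
  have hab_a : a < a * b := lt_mul_of_one_lt_right (by omega) hb
  have hab_b : b < a * b := lt_mul_of_one_lt_left (by omega) ha
  have hi := congrFun h i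
  have hj := congrFun h j
  have hi' := congrFun h i'
  have hj' := congrFun h j'
  simp only [Pi.mul_apply, Pi.mulSingle_apply] at hi hj hi' hj'
  grind

theorem Pi.prod_mulSingle_mul_mulSingle {ι M : Type*} [Fintype ι] [DecidableEq ι] [CommMonoid M]
    (i j : ι) (a b : M) : ∏ k, (Pi.mulSingle i a * Pi.mulSingle j b : ι → M) k = a * b := by
  simp [Finset.prod_mul_distrib, Finset.prod_pi_mulSingle']

theorem Pi.one_le_mulSingle_mul_mulSingle_apply_le {ι : Type*} [DecidableEq ι] {N : ι → ℕ}
    (hN : ∀ k, 1 ≤ N k) {a b : ℕ} (ha : 0 < a) (hb : 0 < b) {i j : ι}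
    (hi : a * b ≤ N i) (hj : a * b ≤ N j) (k : ι) :
    1 ≤ (Pi.mulSingle i a * Pi.mulSingle j b : ι → ℕ) k ∧
      (Pi.mulSingle i a * Pi.mulSingle j b : ι → ℕ) k ≤ N k := by
  have := hN k
  simp only [Pi.mul_apply, Pi.mulSingle_apply]
  split_ifs <;> subst_vars <;> constructor <;> nlinarith

theorem finite_boundedFactorizations {m : ℕ} (N : Fin m → ℕ) (s : ℕ) :
    Finite {d : Fin m → ℕ // (∀ i, 1 ≤ d i ∧ d i ≤ N i) ∧ ∏ i, d i = s} :=
  (Set.finite_Iic N).subset fun _ hd i => (hd.1 i).2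

theorem stmt4_general (m : ℕ) (N : Fin m → ℕ) (hN : ∀ i, 2 ≤ N i)
    (s : ℕ) (hs : 1 < s)
    (hnp : ¬ s.Prime) (hsq : ¬ IsSquare s) :
    Nat.card {i : Fin m // s ≤ N i} ^ 2 ≤
    Nat.card {d : Fin m → ℕ // (∀ i, 1 ≤ d i ∧ d i ≤ N i) ∧ ∏ i, d i = s} := by
  obtain ⟨a, b, ha, hb, hab, rfl⟩ := Nat.exists_mul_eq_of_not_prime_of_not_isSquare hs hnp hsq
  have := finite_boundedFactorizations N (a * b)
  have hinj := Pi.mulSingle_mul_mulSingle_injective (ι := Fin m) ha hb hab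
  rw [sq, ← Nat.card_prod]
  have hN₁ : ∀ k, 1 ≤ N k := fun k => (hN k).trans' one_le_two
  refine Nat.card_le_card_of_injective
    (fun p => ⟨Pi.mulSingle p.1.1 a * Pi.mulSingle p.2.1 b,
      Pi.one_le_mulSingle_mul_mulSingle_apply_le hN₁ (by omega) (by omega) p.1.2 p.2.2,
      Pi.prod_mulSingle_mul_mulSingle _ _ a b⟩) ?_
  rintro ⟨⟨i, _⟩, ⟨j, _⟩⟩ ⟨⟨i', _⟩, ⟨j', _⟩⟩ h
  obtain ⟨rfl, rfl⟩ := Prod.mk.inj (hinj (congrArg Subtype.val h))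
  rfl

/-- if `s > 1` is composite and not a perfect square then `τ(s) ≥ K²`
where `K` is the number of indices with `s ≤ Nᵢ`. -/
theorem stmt4 (m : ℕ) (N : Fin m → ℕ) (hN : ∀ i, 2 ≤ N i)
    (hmono : ∀ i j : Fin m, i ≤ j → N j ≤ N i) (s : ℕ) (hs : 1 < s)
    (hnp : ¬ s.Prime) (hsq : ¬ IsSquare s) :
    Nat.card {i : Fin m // s ≤ N i} ^ 2 ≤
    Nat.card {d : Fin m → ℕ // (∀ i, 1 ≤ d i ∧ d i ≤ N i) ∧ ∏ i, d i = s} :=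
  stmt4_general m N hN s hs hnp hsq
end

section
/- With notation as in the Cartesian-product code construction, the minimum Hamming distance of C(L) satisfies d(C(L)) ≥ min{σ(X^a) : X^a ∈ L}, where σ(X^a) = ∏_{j=1}^m (p^{rⱼ} − aⱼ). Moreover, if L is downward closed (X^a ∈ L and bⱼ ≤ aⱼ for all j implies X^b ∈ L), then equality holds. -/
/-- The evaluation vector over `S = ∏_j A_j` of the monomial with exponent vector `a`. -/
def evalVec {F : Type*} [Field F] {m : ℕ} (A : Fin m → Subfield F) (a : Fin m → ℕ) :
    {α : Fin m → F // ∀ j, α j ∈ A j} → F :=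
  fun α => ∏ j, (α.1 j) ^ (a j)

/-- The Hamming weight of a word. -/
noncomputable def wt {S F : Type*} [Zero F] (c : S → F) : ℕ := Nat.card {s : S // c s ≠ 0}

/-- The minimum Hamming weight of a nonzero word of a code `C`. -/
noncomputable def dMin {S F : Type*} [Zero F] (C : Set (S → F)) : ℕ :=
  sInf {w : ℕ | ∃ c ∈ C, c ≠ 0 ∧ wt c = w}

/-!
Lower bound: every codeword is the evaluation on the grid `S = ∏ A_j` of a polynomial whose
monomials lie in `L`, and a nonzero polynomial `f` has a monomial `X^a` in its support with at
least `∏ j, (|A_j| - a_j)` non-zeros on `S` (induction on the number of variables: in the first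
variable `f` has degree `k` with leading coefficient `g`; at each point where `g` does not vanish,
at most `k` values of the first coordinate are zeros).

Equality for downward-closed `L`: pick `T_j ⊆ A_j` with `|T_j| = a_j`; the codeword
`∏ j, ∏ t ∈ T_j, (X_j - t)` only involves monomials below `X^a`, hence in `L`, and is nonzero
exactly on `∏ j, (A_j \ T_j)`.
-/

open Finset Fintype

theorem Finset.card_filter_piFinset_succ {n : ℕ} {α : Type*} (S : Fin (n + 1) → Finset α)
    (P : (Fin (n + 1) → α) → Prop) [DecidablePred P] :
    #{x ∈ piFinset S | P x} =
      ∑ y ∈ piFinset (Fin.tail S), #{x₀ ∈ S 0 | P (Fin.cons x₀ y)} := by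
  have hS : piFinset S = (S 0 ×ˢ piFinset (Fin.tail S)).map (Fin.consEquiv _).toEmbedding := by
    simpa using filter_piFinset_eq_map_consEquiv S fun _ => True
  rw [hS, filter_map, card_map, card_filter, sum_product_right]
  exact sum_congr rfl fun y _ => (card_filter _ _).symm

theorem Polynomial.card_sub_natDegree_le_card_filter_eval_ne_zero {R : Type*} [CommRing R]
    [IsDomain R] [DecidableEq R] {h : Polynomial R} (hh : h ≠ 0) (S : Finset R) :
    #S - h.natDegree ≤ #{x ∈ S | h.eval x ≠ 0} := by
  have hroots : #{x ∈ S | h.eval x = 0} ≤ h.natDegree :=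
    card_le_degree_of_subset_roots fun x hx => by
      simp_all [mem_roots hh]
  have := card_filter_add_card_filter_not (s := S) (p := fun x => h.eval x = 0)
  simp only [ne_eq]
  omega

open Polynomial in
theorem Polynomial.card_filter_eval_prod_X_sub_C_ne_zero {R : Type*} [CommRing R] [IsDomain R]
    [DecidableEq R] {S T : Finset R} (hTS : T ⊆ S) :
    #{x ∈ S | (∏ t ∈ T, (X - C t)).eval x ≠ 0} = #S - #T := by
  rw [← card_sdiff_of_subset hTS]
  congr 1
  ext x
  simp [eval_prod, prod_ne_zero_iff, sub_eq_zero]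

namespace MvPolynomial

variable {R : Type*} [CommRing R] [IsDomain R] [DecidableEq R]

theorem exists_mem_support_prod_card_sub_le :
    ∀ {n : ℕ} {f : MvPolynomial (Fin n) R}, f ≠ 0 → ∀ S : Fin n → Finset R,
      ∃ a ∈ f.support, ∏ i, (#(S i) - a i) ≤ #{x ∈ piFinset S | eval x f ≠ 0}
  | 0, f, hf, S => by
    rw [f.eq_C_of_isEmpty] at hf ⊢
    refine ⟨0, by simpa using hf, ?_⟩
    simp [C_ne_zero.mp hf]
  | n + 1, f, hf, S => by
    set g := finSuccEquiv R n f
    have hlc : g.leadingCoeff ≠ 0 := by simpa [g] using hf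
    obtain ⟨b, hb, hcard⟩ := exists_mem_support_prod_card_sub_le hlc (Fin.tail S)
    refine ⟨b.cons g.natDegree, mem_support_coeff_finSuccEquiv.mp hb, ?_⟩
    calc ∏ i, (#(S i) - b.cons g.natDegree i)
        = (#(S 0) - g.natDegree) * ∏ i, (#(Fin.tail S i) - b i) := by
          simp [Fin.prod_univ_succ, Fin.tail]
      _ ≤ ∑ y ∈ piFinset (Fin.tail S) with eval y g.leadingCoeff ≠ 0, (#(S 0) - g.natDegree) := by
          rw [sum_const, smul_eq_mul, mul_comm]
          exact Nat.mul_le_mul_right _ hcard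
      _ ≤ ∑ y ∈ piFinset (Fin.tail S) with eval y g.leadingCoeff ≠ 0,
            #{x₀ ∈ S 0 | eval (Fin.cons x₀ y) f ≠ 0} := by
          refine sum_le_sum fun y hy => ?_
          have hy : eval y g.leadingCoeff ≠ 0 := (mem_filter.mp hy).2
          have hdeg : (g.map (eval y)).natDegree = g.natDegree :=
            Polynomial.natDegree_map_of_leadingCoeff_ne_zero _ hy
          have hne : g.map (eval y) ≠ 0 := Polynomial.leadingCoeff_ne_zero.mp <| by
            rwa [Polynomial.leadingCoeff_map_of_leadingCoeff_ne_zero _ hy]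
          simpa only [eval_eq_eval_mv_eval', hdeg] using
            Polynomial.card_sub_natDegree_le_card_filter_eval_ne_zero hne (S 0)
      _ ≤ #{x ∈ piFinset S | eval x f ≠ 0} := by
          rw [card_filter_piFinset_succ]
          exact sum_le_sum_of_subset (filter_subset _ _)

end MvPolynomial

section MinimumDistance

variable {S F : Type*} [Zero F]

@[simp] theorem wt_zero : wt (0 : S → F) = 0 := by
  simp [wt]

theorem dMin_le_wt {C : Set (S → F)} {c : S → F} (hc : c ∈ C) (hc0 : c ≠ 0) : dMin C ≤ wt c :=
  Nat.sInf_le ⟨c, hc, hc0, rfl⟩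

theorem le_dMin {C : Set (S → F)} {n : ℕ} (hC : ∃ c ∈ C, c ≠ 0)
    (h : ∀ c ∈ C, c ≠ 0 → n ≤ wt c) : n ≤ dMin C := by
  obtain ⟨c, hc, hc0⟩ := hC
  refine le_csInf ⟨_, c, hc, hc0, rfl⟩ ?_
  rintro _ ⟨c, hc, hc0, rfl⟩
  exact h c hc hc0

end MinimumDistance

namespace CartesianCode

open MvPolynomial Submodule

variable {F : Type*} [Field F] {m : ℕ} (A : Fin m → Subfield F)

abbrev grid : Type _ := {α : Fin m → F // ∀ j, α j ∈ A j}

noncomputable def evalOnGrid : MvPolynomial (Fin m) F →ₗ[F] (grid A → F) where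
  toFun P α := eval α.1 P
  map_add' P Q := by ext; simp
  map_smul' c P := by ext; simp

theorem evalVec_eq_evalOnGrid_monomial (a : Fin m →₀ ℕ) :
    evalVec A a = evalOnGrid A (monomial a 1) := by
  ext α
  simp [evalVec, evalOnGrid, eval_monomial, Finsupp.prod_fintype]

theorem span_evalVec_image_eq_map (L : Set (Fin m → ℕ)) :
    span F (evalVec A '' L) = (restrictSupport F {a | ⇑a ∈ L}).map (evalOnGrid A) := by
  rw [restrictSupport_eq_span, map_span, Set.image_image]
  congr 1
  ext c
  constructor
  · rintro ⟨a, ha, rfl⟩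
    exact ⟨Finsupp.equivFunOnFinite.symm a, by simpa using ha,
      by simp only [← evalVec_eq_evalOnGrid_monomial, Finsupp.coe_equivFunOnFinite_symm]⟩
  · rintro ⟨a, ha, rfl⟩
    exact ⟨a, ha, evalVec_eq_evalOnGrid_monomial A a⟩

theorem evalVec_ne_zero (a : Fin m → ℕ) : evalVec A a ≠ 0 := fun h => by
  simpa [evalVec] using congrFun h ⟨1, fun j => one_mem _⟩

theorem prod_eval_mem_span_evalVec {a : Fin m → ℕ} (Q : Fin m → Polynomial F)
    (hQ : ∀ j, (Q j).natDegree ≤ a j) :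
    (fun α : grid A => ∏ j, (Q j).eval (α.1 j)) ∈ span F (evalVec A '' {b | ∀ j, b j ≤ a j}) := by
  have hexpand : (fun α : grid A => ∏ j, (Q j).eval (α.1 j)) =
      ∑ b ∈ Fintype.piFinset fun j => range (a j + 1), (∏ j, (Q j).coeff (b j)) • evalVec A b := by
    ext α
    simp only [Finset.sum_apply, Pi.smul_apply, smul_eq_mul, evalVec,
      Polynomial.eval_eq_sum_range' (Nat.lt_succ_of_le (hQ _)), prod_univ_sum, prod_mul_distrib]
  rw [hexpand]
  refine sum_mem fun b hb => smul_mem _ _ (subset_span ⟨b, fun j => ?_, rfl⟩)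
  exact Nat.lt_succ_iff.mp (mem_range.mp (Fintype.mem_piFinset.mp hb j))

section Finite

open scoped Classical

variable [Fintype F]

theorem card_toFinset (j : Fin m) : #(A j : Set F).toFinset = Nat.card (A j) :=
  (Nat.card_eq_card_toFinset _).symm

theorem wt_eq_card_filter (f : (Fin m → F) → F) :
    wt (fun α : grid A => f α.1) =
      #{x ∈ piFinset fun j => (A j : Set F).toFinset | f x ≠ 0} := by
  rw [wt, Nat.card_congr (Equiv.subtypeSubtypeEquivSubtypeInter _ fun x => f x ≠ 0),
    Nat.card_eq_fintype_card, Fintype.card_subtype]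
  congr 1
  ext x
  simp

theorem wt_prod_eval (g : Fin m → F → F) :
    wt (fun α : grid A => ∏ j, g j (α.1 j)) = ∏ j, #{x ∈ (A j : Set F).toFinset | g j x ≠ 0} := by
  rw [wt_eq_card_filter A fun x => ∏ j, g j (x j), ← card_piFinset]
  congr 1
  ext x
  simp [prod_ne_zero_iff, forall_and]

theorem exists_mem_prod_card_sub_le_wt {L : Set (Fin m → ℕ)} {c : grid A → F}
    (hc : c ∈ span F (evalVec A '' L)) (hc0 : c ≠ 0) :
    ∃ a ∈ L, ∏ j, (Nat.card (A j) - a j) ≤ wt c := by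
  rw [span_evalVec_image_eq_map] at hc
  obtain ⟨P, hP, rfl⟩ := hc
  have hP0 : P ≠ 0 := by
    rintro rfl
    exact hc0 (map_zero _)
  obtain ⟨a, ha, hle⟩ := exists_mem_support_prod_card_sub_le hP0 fun j => (A j : Set F).toFinset
  refine ⟨a, (mem_restrictSupport_iff (R := F)).mp hP ha, ?_⟩
  rw [show evalOnGrid A P = fun α : grid A => eval α.1 P from rfl,
    wt_eq_card_filter A fun x => eval x P]
  simpa only [card_toFinset] using hle

theorem exists_mem_span_wt_eq {a : Fin m → ℕ} (ha : ∀ j, a j ≤ Nat.card (A j)) :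
    ∃ c ∈ span F (evalVec A '' {b | ∀ j, b j ≤ a j}), wt c = ∏ j, (Nat.card (A j) - a j) := by
  choose T hTA hT using fun j =>
    exists_subset_card_eq (s := (A j : Set F).toFinset) (n := a j)
      (card_toFinset A j ▸ ha j)
  refine ⟨_, prod_eval_mem_span_evalVec A (fun j => ∏ t ∈ T j, (Polynomial.X - Polynomial.C t))
    fun j => by rw [Polynomial.natDegree_finsetProd_X_sub_C_eq_card, hT], ?_⟩
  rw [wt_prod_eval A fun j x => Polynomial.eval x (∏ t ∈ T j, (Polynomial.X - Polynomial.C t))]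
  refine prod_congr rfl fun j _ => ?_
  rw [Polynomial.card_filter_eval_prod_X_sub_C_ne_zero (hTA j), hT, card_toFinset]

end Finite

end CartesianCode

open CartesianCode Submodule in
theorem stmt12_general (p m : ℕ) (r : Fin m → ℕ) (F : Type*) [Field F] [Fintype F]
    (A : Fin m → Subfield F) (hA : ∀ j, Nat.card (A j) = p ^ r j)
    (L : Set (Fin m → ℕ)) (hL : ∀ a ∈ L, ∀ j, a j < p ^ r j) (hLne : L.Nonempty) :
    sInf {δ : ℕ | ∃ a ∈ L, ∏ j, (p ^ r j - a j) = δ} ≤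
      dMin ((Submodule.span F (evalVec A '' L) :
        Submodule F ({α : Fin m → F // ∀ j, α j ∈ A j} → F)) :
        Set ({α : Fin m → F // ∀ j, α j ∈ A j} → F)) ∧
    ((∀ a ∈ L, ∀ b : Fin m → ℕ, (∀ j, b j ≤ a j) → b ∈ L) →
      dMin ((Submodule.span F (evalVec A '' L) :
        Submodule F ({α : Fin m → F // ∀ j, α j ∈ A j} → F)) :
        Set ({α : Fin m → F // ∀ j, α j ∈ A j} → F)) =
        sInf {δ : ℕ | ∃ a ∈ L, ∏ j, (p ^ r j - a j) = δ}) := by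
  have hσ (a : Fin m → ℕ) : ∏ j, (Nat.card (A j) - a j) = ∏ j, (p ^ r j - a j) := by
    simp only [hA]
  obtain ⟨a₀, ha₀⟩ := hLne
  have lower : sInf {δ : ℕ | ∃ a ∈ L, ∏ j, (p ^ r j - a j) = δ} ≤
      dMin (span F (evalVec A '' L) : Set (grid A → F)) := by
    refine le_dMin ⟨_, subset_span ⟨a₀, ha₀, rfl⟩, evalVec_ne_zero A a₀⟩ fun c hc hc0 => ?_
    obtain ⟨a, ha, hle⟩ := exists_mem_prod_card_sub_le_wt A hc hc0
    rw [hσ] at hle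
    exact le_trans (Nat.sInf_le ⟨a, ha, rfl⟩) hle
  refine ⟨lower, fun hdown => le_antisymm (le_csInf ⟨_, a₀, ha₀, rfl⟩ ?_) lower⟩
  rintro _ ⟨a, ha, rfl⟩
  obtain ⟨c, hc, hwt⟩ := exists_mem_span_wt_eq A fun j => hA j ▸ (hL a ha j).le
  have hc0 : c ≠ 0 := by
    rintro rfl
    rw [wt_zero, hσ] at hwt
    exact (prod_pos fun j _ => Nat.sub_pos_of_lt (hL a ha j)).ne hwt
  rw [← hσ, ← hwt]
  exact dMin_le_wt (span_mono (Set.image_mono fun b hb => hdown a ha b hb) hc) hc0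

/-- `d(C(L)) ≥ min{σ(X^a) : X^a ∈ L}`, with equality when `L`
is downward closed. -/
theorem stmt12 (p rr m : ℕ) (hp : p.Prime) (r : Fin m → ℕ) (hr : ∀ j, 0 < r j)
    (hdvd : ∀ j, r j ∣ rr) (F : Type*) [Field F] [Fintype F]
    (hF : Fintype.card F = p ^ rr)
    (A : Fin m → Subfield F) (hA : ∀ j, Nat.card (A j) = p ^ r j)
    (L : Set (Fin m → ℕ)) (hL : ∀ a ∈ L, ∀ j, a j < p ^ r j) (hLne : L.Nonempty) :
    sInf {δ : ℕ | ∃ a ∈ L, ∏ j, (p ^ r j - a j) = δ} ≤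
      dMin ((Submodule.span F (evalVec A '' L) :
        Submodule F ({α : Fin m → F // ∀ j, α j ∈ A j} → F)) :
        Set ({α : Fin m → F // ∀ j, α j ∈ A j} → F)) ∧
    ((∀ a ∈ L, ∀ b : Fin m → ℕ, (∀ j, b j ≤ a j) → b ∈ L) →
      dMin ((Submodule.span F (evalVec A '' L) :
        Submodule F ({α : Fin m → F // ∀ j, α j ∈ A j} → F)) :
        Set ({α : Fin m → F // ∀ j, α j ∈ A j} → F)) =
        sInf {δ : ℕ | ∃ a ∈ L, ∏ j, (p ^ r j - a j) = δ}) :=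
  stmt12_general p m r F A hA L hL hLne
end

section
/- Let p be prime, rⱼ ∣ r, q = p^r, and δ ≥ 1. Define L(δ) = {a : 0 ≤ aⱼ < p^{rⱼ}, σ(a) ≥ δ} and L^⊥(δ) = {b : 0 ≤ bⱼ < p^{rⱼ}, μ(b) < δ} where σ(a) = ∏(p^{rⱼ}−aⱼ) and μ(b) = ∏(bⱼ+1). Then the Euclidean dual of the evaluation code C(L(δ)) equals C(L^⊥(δ)). -/
open scoped Classical

/-- The Euclidean dual of a linear code `C ⊆ F^ι`. -/
def dualCode {F : Type*} [Field F] {ι : Type*} [Fintype ι] (C : Submodule F (ι → F)) :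
    Submodule F (ι → F) where
  carrier := {x | ∀ c ∈ C, ∑ i, x i * c i = 0}
  add_mem' := by
    intro a b ha hb c hc
    simp only [Set.mem_setOf_eq] at *
    simp [Pi.add_apply, add_mul, Finset.sum_add_distrib, ha c hc, hb c hc]
  zero_mem' := by
    intro c hc
    simp
  smul_mem' := by
    intro t a ha c hc
    simp only [Set.mem_setOf_eq] at *
    simp [Pi.smul_apply, smul_eq_mul, mul_assoc, ← Finset.mul_sum, ha c hc]

/-!
Evaluation vectors pair through a product of power sums,
`ev a ⬝ᵥ ev b = ∏ⱼ ∑_{x ∈ Aⱼ} x ^ (aⱼ + bⱼ)`, and a power sum over a field of order `q` vanishes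
for exponents below `q - 1` and equals `-1` at `q - 1`. If `σ(a) ≥ δ > μ(b)`, some coordinate has
`aⱼ + bⱼ < qⱼ - 1`, so `C(L^⊥(δ)) ⊆ C(L(δ))^⊥`. Pairing against the complementary monomial
`X^(q - 1 - a)` shows that the `n = ∏ qⱼ` reduced monomials are linearly independent, so each code
has dimension equal to its number of exponents. Reversing every coordinate `aⱼ ↦ qⱼ - 1 - aⱼ`
carries `σ` to `μ`, whence `|L(δ)| + |L^⊥(δ)| = n` and the inclusion is an equality.
-/

open Finset Module

theorem FiniteField.sum_pow_card_sub_one_eq_neg_one (K : Type*) [Field K] [Fintype K] :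
    ∑ x : K, x ^ (Fintype.card K - 1) = -1 := by
  have hq : 1 < Fintype.card K := Fintype.one_lt_card
  have hpow : ∀ x : K, x ^ (Fintype.card K - 1) = if x = 0 then 0 else 1 := by
    intro x
    split_ifs with hx
    · rw [hx, zero_pow (by omega)]
    · exact FiniteField.pow_card_sub_one_eq_one x hx
  simp only [hpow, sum_ite, sum_const_zero, sum_const, nsmul_one, zero_add]
  rw [filter_ne', card_erase_of_mem (mem_univ _), card_univ,
    Nat.cast_sub hq.le, FiniteField.cast_card_eq_zero, Nat.cast_one, zero_sub]

namespace Subfield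

variable {F : Type*} [Field F] (K : Subfield F) [Fintype K]

theorem sum_coe_pow_eq_zero {k : ℕ} (hk : k < Nat.card K - 1) : ∑ x : K, (x : F) ^ k = 0 := by
  rw [Nat.card_eq_fintype_card] at hk
  exact_mod_cast congrArg ((↑) : K → F) (FiniteField.sum_pow_lt_card_sub_one K k hk)

theorem sum_coe_pow_card_sub_one : ∑ x : K, (x : F) ^ (Nat.card K - 1) = -1 := by
  rw [Nat.card_eq_fintype_card]
  exact_mod_cast congrArg ((↑) : K → F) (FiniteField.sum_pow_card_sub_one_eq_neg_one K)

end Subfield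

section DualCode

variable {F : Type*} [Field F] {ι : Type*} [Fintype ι]

theorem dualCode_eq_orthogonal (C : Submodule F (ι → F)) :
    dualCode C = LinearMap.BilinForm.orthogonal (dotProductBilin F F) C := by
  ext x
  simp only [LinearMap.BilinForm.mem_orthogonal_iff, dotProductBilin_apply_apply, dotProduct_comm]
  rfl

theorem finrank_dualCode (C : Submodule F (ι → F)) :
    finrank F (dualCode C) = Fintype.card ι - finrank F C := by
  have hnondeg : (dotProductBilin F F : LinearMap.BilinForm F (ι → F)).Nondegenerate :=
    ⟨fun x hx => funext fun i => by simpa using hx (Pi.single i 1),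
      fun x hx => funext fun i => by simpa using hx (Pi.single i 1)⟩
  rw [dualCode_eq_orthogonal, LinearMap.BilinForm.finrank_orthogonal hnondeg,
    finrank_fintype_fun_eq_card]

theorem span_le_dualCode_span {s t : Set (ι → F)} (h : ∀ x ∈ s, ∀ y ∈ t, x ⬝ᵥ y = 0) :
    Submodule.span F t ≤ dualCode (Submodule.span F s) := by
  refine Submodule.span_le.2 fun y hy c hc => ?_
  have hker : Submodule.span F s ≤ LinearMap.ker (dotProductBilin F F y) :=
    Submodule.span_le.2 fun x hx => by simpa [dotProduct_comm] using h x hx y hy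
  exact hker hc

end DualCode

theorem card_le_prod_sub_add_card_prod_add_one_lt {ι : Type*} [Fintype ι] (n : ι → ℕ)
    (δ : ℕ) :
    Nat.card {i : ∀ j, Fin (n j) // δ ≤ ∏ j, (n j - i j)} +
      Nat.card {i : ∀ j, Fin (n j) // ∏ j, ((i j : ℕ) + 1) < δ} = ∏ j, n j := by
  have hrev : Nat.card {i : ∀ j, Fin (n j) // δ ≤ ∏ j, (n j - i j)} =
      Nat.card {i : ∀ j, Fin (n j) // δ ≤ ∏ j, ((i j : ℕ) + 1)} := by
    refine Nat.card_congr ((Equiv.piCongrRight fun j => Fin.revPerm).subtypeEquiv fun i => ?_)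
    have hsub : ∀ j, n j - i j = ((i j).rev : ℕ) + 1 := fun j => by
      rw [Fin.val_rev]; have := (i j).isLt; omega
    simp [hsub]
  simp only [hrev, ← not_le, Nat.card_eq_fintype_card]
  rw [Fintype.card_subtype_compl, Nat.add_sub_cancel' (Fintype.card_subtype_le _),
    Fintype.card_pi]
  simp only [Fintype.card_fin]

section Evaluation

variable {F : Type*} [Field F] [Fintype F] {m : ℕ} (A : Fin m → Subfield F)

theorem evalVec_dotProduct_evalVec (a b : Fin m → ℕ) :
    evalVec A a ⬝ᵥ evalVec A b = ∏ j, ∑ x : A j, (x : F) ^ (a j + b j) := by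
  rw [Fintype.prod_sum, dotProduct, ← (Equiv.subtypePiEquivPi).symm.sum_comp]
  simp only [evalVec, ← prod_mul_distrib, ← pow_add]
  rfl

theorem evalVec_dotProduct_evalVec_eq_zero {a b : Fin m → ℕ}
    (h : ∃ j, a j + b j < Nat.card (A j) - 1) : evalVec A a ⬝ᵥ evalVec A b = 0 := by
  obtain ⟨j, hj⟩ := h
  rw [evalVec_dotProduct_evalVec]
  exact prod_eq_zero (mem_univ j) (Subfield.sum_coe_pow_eq_zero _ hj)

theorem evalVec_dotProduct_evalVec_of_add_eq {a b : Fin m → ℕ}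
    (h : ∀ j, a j + b j = Nat.card (A j) - 1) : evalVec A a ⬝ᵥ evalVec A b = (-1) ^ m := by
  simp only [evalVec_dotProduct_evalVec, h, Subfield.sum_coe_pow_card_sub_one, prod_const,
    card_univ, Fintype.card_fin]

theorem evalVec_dotProduct_evalVec_eq_zero_of_le_of_lt {δ : ℕ} {a b : Fin m → ℕ}
    (ha : δ ≤ ∏ j, (Nat.card (A j) - a j)) (hb : ∏ j, (b j + 1) < δ) :
    evalVec A a ⬝ᵥ evalVec A b = 0 := by
  refine evalVec_dotProduct_evalVec_eq_zero A ?_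
  by_contra! h
  have : ∏ j, (Nat.card (A j) - a j) ≤ ∏ j, (b j + 1) :=
    prod_le_prod' fun j _ => by have := h j; omega
  omega

theorem linearIndependent_evalVec :
    LinearIndependent F (fun i : (∀ j, Fin (Nat.card (A j))) => evalVec A (fun j => i j)) := by
  rw [Fintype.linearIndependent_iff]
  intro g hg
  by_contra! hne
  obtain ⟨a, ha⟩ := exists_maximal (s := univ.filter (g · ≠ 0))
    (let ⟨i, hi⟩ := hne; ⟨i, by simpa using hi⟩)
  -- by maximality, `a` is the only exponent of the support not orthogonal to `X^(q - 1 - a)`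
  have hpair := congrArg (· ⬝ᵥ evalVec A (fun j => Nat.card (A j) - 1 - a j)) hg
  simp only [sum_dotProduct, smul_dotProduct, zero_dotProduct, smul_eq_mul] at hpair
  rw [sum_eq_single a] at hpair
  · rw [evalVec_dotProduct_evalVec_of_add_eq A (fun j => by have := (a j).isLt; omega)] at hpair
    exact (mem_filter.1 ha.prop).2 (by simpa using hpair)
  · intro i _ hia
    by_cases hgi : g i = 0
    · rw [hgi, zero_mul]
    · have hai : ¬ a ≤ i := fun hai => hia (le_antisymm (ha.2 (by simpa using hgi) hai) hai)
      obtain ⟨j, hj⟩ : ∃ j, i j < a j := by simpa [Pi.le_def] using hai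
      rw [evalVec_dotProduct_evalVec_eq_zero A ⟨j, by omega⟩, mul_zero]
  · simp

theorem finrank_span_evalVec_image (P : (Fin m → ℕ) → Prop) :
    finrank F (Submodule.span F (evalVec A '' {a | (∀ j, a j < Nat.card (A j)) ∧ P a})) =
      Nat.card {i : ∀ j, Fin (Nat.card (A j)) // P (fun j => i j)} := by
  have himage : evalVec A '' {a | (∀ j, a j < Nat.card (A j)) ∧ P a} =
      Set.range fun i : {i : ∀ j, Fin (Nat.card (A j)) // P (fun j => i j)} =>
        evalVec A (fun j => i.1 j) := by
    ext v
    constructor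
    · rintro ⟨a, ⟨ha, hP⟩, rfl⟩
      exact ⟨⟨fun j => ⟨a j, ha j⟩, hP⟩, rfl⟩
    · rintro ⟨⟨i, hP⟩, rfl⟩
      exact ⟨fun j => i j, ⟨fun j => (i j).isLt, hP⟩, rfl⟩
  rw [himage, Nat.card_eq_fintype_card]
  exact finrank_span_eq_card ((linearIndependent_evalVec A).comp _ Subtype.val_injective)

end Evaluation

theorem stmt14_general (p m : ℕ) (r : Fin m → ℕ) (F : Type*) [Field F] [Fintype F]
    (A : Fin m → Subfield F) (hA : ∀ j, Nat.card (A j) = p ^ r j) (δ : ℕ) :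
    dualCode (Submodule.span F (evalVec A ''
        {a : Fin m → ℕ | (∀ j, a j < p ^ r j) ∧ δ ≤ ∏ j, (p ^ r j - a j)})) =
      Submodule.span F (evalVec A ''
        {b : Fin m → ℕ | (∀ j, b j < p ^ r j) ∧ ∏ j, (b j + 1) < δ}) := by
  simp only [← hA]
  refine (Submodule.eq_of_le_of_finrank_le (span_le_dualCode_span ?_) ?_).symm
  · rintro _ ⟨a, ⟨-, ha⟩, rfl⟩ _ ⟨b, ⟨-, hb⟩, rfl⟩
    exact evalVec_dotProduct_evalVec_eq_zero_of_le_of_lt A ha hb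
  · have hcount := card_le_prod_sub_add_card_prod_add_one_lt (fun j => Nat.card (A j)) δ
    rw [finrank_dualCode, finrank_span_evalVec_image, finrank_span_evalVec_image,
      Fintype.card_eq_nat_card, Nat.card_congr Equiv.subtypePiEquivPi, Nat.card_pi]
    beta_reduce
    omega

/-- the Euclidean dual of the improved code `C(L(δ))` is `C(L^⊥(δ))`,
where `L(δ) = {a : σ(a) ≥ δ}` and `L^⊥(δ) = {b : μ(b) < δ}`. -/
theorem stmt14 (p rr m : ℕ) (hp : p.Prime) (r : Fin m → ℕ) (hr : ∀ j, 0 < r j)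
    (hdvd : ∀ j, r j ∣ rr) (F : Type*) [Field F] [Fintype F]
    (hF : Fintype.card F = p ^ rr)
    (A : Fin m → Subfield F) (hA : ∀ j, Nat.card (A j) = p ^ r j)
    (δ : ℕ) (hδ : 1 ≤ δ) :
    dualCode (Submodule.span F (evalVec A ''
        {a : Fin m → ℕ | (∀ j, a j < p ^ r j) ∧ δ ≤ ∏ j, (p ^ r j - a j)})) =
      Submodule.span F (evalVec A ''
        {b : Fin m → ℕ | (∀ j, b j < p ^ r j) ∧ ∏ j, (b j + 1) < δ}) :=
  stmt14_general p m r F A hA δ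
end

section
/- Let p be prime, rⱼ ∣ r, and q = p^r. Then C(L^⊥(δ)) ⊆ C(L(δ))^⊥, i.e., for any exponent vectors a, b with 0 ≤ aⱼ, bⱼ < p^{rⱼ}, if σ(a) ≥ δ and μ(b) < δ, then the evaluations of X^a and X^b over S are orthogonal. -/
open scoped Classical

/-- In a finite field `K`, if `∑ x : K, x ^ e ≠ 0` then `e > 0` and `card K - 1 ∣ e`. -/
lemma sum_pow_ne_zero_imp (K : Type*) [Field K] [Fintype K] (e : ℕ)
    (h : ∑ x : K, x ^ e ≠ 0) : 0 < e ∧ (Fintype.card K - 1) ∣ e := by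
  by_contra hc
  apply h
  push_neg at hc
  rcases Nat.eq_zero_or_pos e with he | he
  · subst he
    simp only [pow_zero, Finset.sum_const, Finset.card_univ, nsmul_eq_mul, mul_one]
    exact FiniteField.cast_card_eq_zero K
  · have hnd : ¬ (Fintype.card K - 1) ∣ e := hc he
    classical
    let φ : Kˣ ↪ K := ⟨fun x ↦ x, Units.val_injective⟩
    have huniv : Finset.univ.map φ = Finset.univ \ {(0 : K)} := by
      ext x
      simpa only [Finset.mem_map, Finset.mem_univ, Function.Embedding.coeFn_mk, true_and,
        Finset.mem_sdiff, Finset.mem_singleton, φ, IsUnit, ne_eq] using isUnit_iff_ne_zero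
    calc
      ∑ x : K, x ^ e = ∑ x ∈ Finset.univ \ {(0 : K)}, x ^ e := by
        rw [← Finset.sum_sdiff (({0} : Finset K).subset_univ), Finset.sum_singleton,
          zero_pow he.ne', add_zero]
      _ = ∑ x : Kˣ, ((x : K) ^ e) := by simp [φ, ← huniv, Finset.univ.sum_map φ]
      _ = 0 := by rw [FiniteField.sum_pow_units K e, if_neg hnd]

/-- `C(L^⊥(δ)) ⊆ C(L(δ))^⊥`: if `σ(a) ≥ δ` and `μ(b) < δ` then the
evaluation vectors of `X^a` and `X^b` over `S = 𝔽_{p^{r₁}} × ⋯ × 𝔽_{p^{rₘ}}` are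
orthogonal. -/
theorem stmt15 (p rr m : ℕ) (hp : p.Prime) (r : Fin m → ℕ) (hr : ∀ j, 0 < r j)
    (hdvd : ∀ j, r j ∣ rr) (F : Type*) [Field F] [Fintype F]
    (hF : Fintype.card F = p ^ rr)
    (A : Fin m → Subfield F) (hA : ∀ j, Nat.card (A j) = p ^ r j)
    (δ : ℕ) (a b : Fin m → ℕ) (ha : ∀ j, a j < p ^ r j) (hb : ∀ j, b j < p ^ r j)
    (hσ : δ ≤ ∏ j, (p ^ r j - a j)) (hμ : ∏ j, (b j + 1) < δ) :
    ∑ α : {α : Fin m → F // ∀ j, α j ∈ A j},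
      (∏ j, (α.1 j) ^ (a j)) * (∏ j, (α.1 j) ^ (b j)) = 0 := by
  have hcard : ∀ j, Fintype.card (A j) = p ^ r j := fun j => by
    rw [← Nat.card_eq_fintype_card]; exact hA j
  -- rewrite summand as a single product
  have step1 : ∀ α : {α : Fin m → F // ∀ j, α j ∈ A j},
      (∏ j, (α.1 j) ^ (a j)) * (∏ j, (α.1 j) ^ (b j)) = ∏ j, (α.1 j) ^ (a j + b j) := by
    intro α
    rw [← Finset.prod_mul_distrib]
    exact Finset.prod_congr rfl fun j _ => (pow_add _ _ _).symm
  simp_rw [step1]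
  -- reindex to a pi type
  have step2 : ∑ α : {α : Fin m → F // ∀ j, α j ∈ A j}, ∏ j, (α.1 j) ^ (a j + b j)
      = ∑ g : (∀ j, A j), ∏ j, ((g j : F)) ^ (a j + b j) := by
    refine Fintype.sum_equiv (Equiv.subtypePiEquivPi (p := fun j x => x ∈ A j)) _ _ ?_
    intro α; rfl
  rw [step2]
  -- factor the sum as a product of sums
  have step3 : ∑ g : (∀ j, A j), ∏ j, ((g j : F)) ^ (a j + b j)
      = ∏ j, ∑ x : A j, ((x : F)) ^ (a j + b j) := by
    rw [Finset.prod_univ_sum]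
    rw [Fintype.piFinset_univ]
  rw [step3]
  by_contra hne
  -- every factor is nonzero
  have hfac : ∀ j, (∑ x : A j, ((x : F)) ^ (a j + b j)) ≠ 0 := by
    intro j hj
    exact hne (Finset.prod_eq_zero (Finset.mem_univ j) hj)
  have key : ∀ j, p ^ r j - a j ≤ b j + 1 := by
    intro j
    have h1 : (∑ x : A j, x ^ (a j + b j)) ≠ 0 := by
      intro h0
      apply hfac j
      have : ∑ x : A j, ((x : F)) ^ (a j + b j)
          = ((∑ x : A j, x ^ (a j + b j) : A j) : F) := by
        push_cast; rfl
      rw [this, h0]; exact (A j).subtype.map_zero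
    obtain ⟨hpos, hdvd'⟩ := sum_pow_ne_zero_imp (A j) (a j + b j) h1
    rw [hcard j] at hdvd'
    have hle : p ^ r j - 1 ≤ a j + b j := Nat.le_of_dvd hpos hdvd'
    have := ha j
    omega
  have hprod : ∏ j, (p ^ r j - a j) ≤ ∏ j, (b j + 1) :=
    Finset.prod_le_prod' fun j _ => key j
  omega
end

section
/- Let p be prime, r₁ ≥ r₂ ≥ ⋯ ≥ rₘ positive integers, and 2 < δ ≤ p^{r₂} + 1. Let K be the largest index with δ − 1 ≤ p^{r_K}. Then the number of exponent vectors a (with 0 ≤ aⱼ < p^{rⱼ}) satisfying σ(a) = δ − 1 is at least K, and K ≥ 2. Consequently |L(δ−1)| ≥ |L(δ)| + K where L(δ) = {a : σ(a) ≥ δ}. -/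
/-!
Write `nⱼ = p ^ rⱼ`. If `δ - 1 ≤ nᵢ`, the vector with `aᵢ = nᵢ - (δ - 1)` and `aⱼ = nⱼ - 1`
for `j ≠ i` has `∏ (nⱼ - aⱼ) = δ - 1`; distinct such indices `i` give distinct vectors
because `δ - 1 ≠ 1`.
These vectors lie in `L(δ - 1) \ L(δ)`, and the two indices `0, 1` qualify since `r₀ ≥ r₁`.
-/

theorem Nat.card_and_le_eq_card_and_succ_le_add_card_and_eq {α : Type*} (P : α → Prop)
    (f : α → ℕ) (c : ℕ) (hP : {a | P a}.Finite) :
    Nat.card {a // P a ∧ c ≤ f a} =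
      Nat.card {a // P a ∧ c + 1 ≤ f a} + Nat.card {a // P a ∧ f a = c} := by
  have hsplit : {a | P a ∧ c ≤ f a} = {a | P a ∧ c + 1 ≤ f a} ∪ {a | P a ∧ f a = c} := by
    ext a
    by_cases hPa : P a <;> simp [hPa]
    omega
  have hdisj : Disjoint {a | P a ∧ c + 1 ≤ f a} {a | P a ∧ f a = c} :=
    Set.disjoint_left.2 fun a ha hb => by simp only [Set.mem_ofPred_eq] at ha hb; omega
  change Nat.card {a | P a ∧ c ≤ f a} =
    Nat.card {a | P a ∧ c + 1 ≤ f a} + Nat.card {a | P a ∧ f a = c}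
  simp only [Nat.card_coe_set_eq]
  rw [hsplit, Set.ncard_union_eq hdisj (hP.subset fun a ha => ha.1) (hP.subset fun a ha => ha.1)]

section BoxVectors

theorem finite_setOf_forall_lt {ι : Type*} [Finite ι] (n : ι → ℕ) :
    {a : ι → ℕ | ∀ j, a j < n j}.Finite :=
  Set.Finite.pi' fun j => Set.finite_Iio (n j)

variable {ι : Type*} [DecidableEq ι] (n : ι → ℕ) (c : ℕ)

def singleFactorVector (i : ι) : ι → ℕ :=
  Function.update (fun j => n j - 1) i (n i - c)

variable {n c}

theorem singleFactorVector_lt (hn : ∀ j, 0 < n j) (hc : 0 < c) (i j : ι) :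
    singleFactorVector n c i j < n j := by
  rcases eq_or_ne j i with rfl | hji
  · simp only [singleFactorVector, Function.update_self]
    have := hn j
    omega
  · simp only [singleFactorVector, Function.update_of_ne hji]
    have := hn j
    omega

theorem prod_sub_singleFactorVector [Fintype ι] (hn : ∀ j, 0 < n j) {i : ι} (hi : c ≤ n i) :
    ∏ j, (n j - singleFactorVector n c i j) = c := by
  rw [Finset.prod_eq_single i]
  · simp only [singleFactorVector, Function.update_self]
    omega
  · intro j _ hji
    simp only [singleFactorVector, Function.update_of_ne hji]
    have := hn j
    omega
  · simp

theorem singleFactorVector_injOn (hc : 1 < c) :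
    Set.InjOn (singleFactorVector n c) {i | c ≤ n i} := by
  intro i (hi : c ≤ n i) i' _ h
  by_contra hne
  have hcoord := congrFun h i
  simp only [singleFactorVector, Function.update_self, Function.update_of_ne hne] at hcoord
  omega

theorem card_le_card_prod_sub_eq [Fintype ι] (hn : ∀ j, 0 < n j) (hc : 1 < c) :
    Nat.card {i // c ≤ n i} ≤
      Nat.card {a : ι → ℕ // (∀ j, a j < n j) ∧ ∏ j, (n j - a j) = c} := by
  have : Finite {a : ι → ℕ // (∀ j, a j < n j) ∧ ∏ j, (n j - a j) = c} :=
    ((finite_setOf_forall_lt n).subset fun a ha => ha.1).to_subtype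
  refine Nat.card_le_card_of_injective
    (fun i => ⟨singleFactorVector n c i, singleFactorVector_lt hn (by omega) i,
      prod_sub_singleFactorVector hn i.2⟩) fun i i' h => ?_
  exact Subtype.ext (singleFactorVector_injOn hc i.2 i'.2 (congrArg Subtype.val h))

end BoxVectors

theorem stmt17_general (p m : ℕ) (hm : 2 ≤ m) (r : Fin m → ℕ)
    (hmono : ∀ i j : Fin m, i ≤ j → r j ≤ r i)
    (δ : ℕ) (hδ : 2 < δ) (hδ2 : δ ≤ p ^ r ⟨1, hm⟩ + 1) :
    2 ≤ Nat.card {i : Fin m // δ - 1 ≤ p ^ r i} ∧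
    Nat.card {i : Fin m // δ - 1 ≤ p ^ r i} ≤
      Nat.card {a : Fin m → ℕ // (∀ j, a j < p ^ r j) ∧ ∏ j, (p ^ r j - a j) = δ - 1} ∧
    Nat.card {a : Fin m → ℕ // (∀ j, a j < p ^ r j) ∧ δ ≤ ∏ j, (p ^ r j - a j)} +
        Nat.card {i : Fin m // δ - 1 ≤ p ^ r i} ≤
      Nat.card {a : Fin m → ℕ // (∀ j, a j < p ^ r j) ∧ δ - 1 ≤ ∏ j, (p ^ r j - a j)} := by
  have h1 : δ - 1 ≤ p ^ r ⟨1, hm⟩ := by omega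
  have hp : 1 < p :=
    lt_of_pow_lt_pow_left₀ (r ⟨1, hm⟩) (Nat.zero_le p) (by rw [one_pow]; omega)
  have h0 : δ - 1 ≤ p ^ r ⟨0, by omega⟩ :=
    h1.trans (Nat.pow_le_pow_right (by positivity) (hmono _ _ (Fin.mk_le_mk.2 zero_le_one)))
  have hn : ∀ j, 0 < p ^ r j := fun j => by positivity
  have hK := card_le_card_prod_sub_eq hn (c := δ - 1) (by omega)
  have hK2 : 2 ≤ Nat.card {i : Fin m // δ - 1 ≤ p ^ r i} :=
    Finite.one_lt_card_iff_nontrivial.2 <|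
      nontrivial_of_ne ⟨_, h0⟩ ⟨_, h1⟩ (by simp [Subtype.ext_iff, Fin.ext_iff])
  have hsplit := Nat.card_and_le_eq_card_and_succ_le_add_card_and_eq
    (fun a : Fin m → ℕ => ∀ j, a j < p ^ r j) (fun a => ∏ j, (p ^ r j - a j)) (δ - 1)
    (finite_setOf_forall_lt _)
  rw [Nat.sub_add_cancel (by omega : 1 ≤ δ)] at hsplit
  exact ⟨hK2, hK, by omega⟩

/-- with `r₁ ≥ r₂ ≥ ⋯ ≥ rₘ` and `2 < δ ≤ p^{r₂} + 1`, letting `K` be the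
number of indices with `δ - 1 ≤ p^{r_K}`, one has `K ≥ 2`, the number of admissible
exponent vectors with `σ`-value `δ - 1` is at least `K`, and `|L(δ-1)| ≥ |L(δ)| + K`. -/
theorem stmt17 (p m : ℕ) (hp : p.Prime) (hm : 2 ≤ m) (r : Fin m → ℕ)
    (hr : ∀ j, 0 < r j) (hmono : ∀ i j : Fin m, i ≤ j → r j ≤ r i)
    (δ : ℕ) (hδ : 2 < δ) (hδ2 : δ ≤ p ^ r ⟨1, hm⟩ + 1) :
    2 ≤ Nat.card {i : Fin m // δ - 1 ≤ p ^ r i} ∧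
    Nat.card {i : Fin m // δ - 1 ≤ p ^ r i} ≤
      Nat.card {a : Fin m → ℕ // (∀ j, a j < p ^ r j) ∧ ∏ j, (p ^ r j - a j) = δ - 1} ∧
    Nat.card {a : Fin m → ℕ // (∀ j, a j < p ^ r j) ∧ δ ≤ ∏ j, (p ^ r j - a j)} +
        Nat.card {i : Fin m // δ - 1 ≤ p ^ r i} ≤
      Nat.card {a : Fin m → ℕ // (∀ j, a j < p ^ r j) ∧ δ - 1 ≤ ∏ j, (p ^ r j - a j)} :=
  stmt17_general p m hm r hmono δ hδ hδ2
end

section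
/- Let N₁ ≥ N₂ ≥ ⋯ ≥ Nₘ ≥ 2 be integers and let s > 1 with s ≤ N_K for exactly K indices. If τ(s) (the number of tuples (d₁,…,dₘ), 1 ≤ dᵢ ≤ Nᵢ, ∏dᵢ = s) equals K, then s is prime; conversely if s is prime then τ(s) = K. That is, τ(s) = K if and only if s is prime (for K ≥ 2). -/
/-!
The tuples `Pi.mulSingle i s` with `s ≤ N i` always give `K` distinct factorizations of `s`.
If `s` is prime they are all of them, since a prime has no factorization into natural numbers
other than `s = s · 1 ⋯ 1`. If `s = a b` with `1 < a, b < s`, putting `a` and `b` at two indices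
`i ≠ j` with `s ≤ N i, N j` (there are two since `K ≥ 2`) gives one more, so `τ(s) > K`.
-/

open Finset

theorem Pi.mulSingle_left_injective {ι M : Type*} [DecidableEq ι] [One M] {x : M} (hx : x ≠ 1) :
    Function.Injective fun i : ι => Pi.mulSingle i x := by
  intro i j hij
  by_contra hne
  have := congrFun hij i
  simp only [Pi.mulSingle_eq_same, Pi.mulSingle_eq_of_ne hne] at this
  exact hx this

theorem Nat.exists_eq_mulSingle_of_prod_eq_prime {ι : Type*} [Fintype ι] [DecidableEq ι]
    {p : ℕ} (hp : p.Prime) {d : ι → ℕ} (hd : ∏ i, d i = p) : ∃ i, d = Pi.mulSingle i p := by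
  obtain ⟨i, -, hpi⟩ := hp.prime.exists_mem_finset_dvd (dvd_of_eq hd.symm)
  have hdi : d i = p := Nat.dvd_antisymm (hd ▸ dvd_prod_of_mem d (mem_univ i)) hpi
  have hrest : ∏ j ∈ univ.erase i, d j = 1 := by
    have := mul_prod_erase univ d (mem_univ i)
    rw [hdi, hd] at this
    exact (Nat.mul_eq_left hp.ne_zero).mp this
  refine ⟨i, funext fun j => ?_⟩
  rcases eq_or_ne j i with rfl | hji
  · simp [hdi]
  · rw [Pi.mulSingle_eq_of_ne hji]
    exact Nat.dvd_one.mp (hrest ▸ dvd_prod_of_mem d (mem_erase.mpr ⟨hji, mem_univ j⟩))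

section BoundedFactorizations

variable {ι : Type*} [Fintype ι] (N : ι → ℕ) (s : ℕ)

def boundedFactorizations : Set (ι → ℕ) :=
  {d | (∀ i, 1 ≤ d i ∧ d i ≤ N i) ∧ ∏ i, d i = s}

variable {N s}

theorem boundedFactorizations_finite : (boundedFactorizations N s).Finite :=
  (Set.Finite.pi' fun i => Set.finite_Icc 1 (N i)).subset fun _ hd i => hd.1 i

theorem mem_boundedFactorizations_of_prod_eq (hN : ∀ i, 1 ≤ N i) (hs : s ≠ 0) {d : ι → ℕ}
    (hprod : ∏ i, d i = s) (hle : ∀ i, d i ≠ 1 → d i ≤ N i) : d ∈ boundedFactorizations N s := by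
  refine ⟨fun i => ⟨Nat.pos_of_ne_zero fun h0 => hs ?_, ?_⟩, hprod⟩
  · rw [← hprod]
    exact prod_eq_zero (mem_univ i) h0
  · rcases eq_or_ne (d i) 1 with h1 | h1
    · exact h1 ▸ hN i
    · exact hle i h1

variable [DecidableEq ι]

theorem mulSingle_mem_boundedFactorizations (hN : ∀ i, 1 ≤ N i) (hs : s ≠ 0) {i : ι}
    (hi : s ≤ N i) : Pi.mulSingle i s ∈ boundedFactorizations N s := by
  refine mem_boundedFactorizations_of_prod_eq hN hs (prod_pi_mulSingle' i s univ ▸ by simp) ?_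
  intro j hj
  rcases eq_or_ne j i with rfl | hji
  · simpa using hi
  · exact absurd (Pi.mulSingle_eq_of_ne hji (M := fun _ => ℕ) s) hj

theorem image_mulSingle_subset_boundedFactorizations (hN : ∀ i, 1 ≤ N i) (hs : s ≠ 0) :
    (fun i => Pi.mulSingle i s) '' {i | s ≤ N i} ⊆ boundedFactorizations N s := by
  rintro _ ⟨i, hi, rfl⟩
  exact mulSingle_mem_boundedFactorizations hN hs hi

theorem boundedFactorizations_of_prime (hN : ∀ i, 1 ≤ N i) (hp : s.Prime) :
    boundedFactorizations N s = (fun i => Pi.mulSingle i s) '' {i | s ≤ N i} := by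
  refine subset_antisymm (fun d hd => ?_)
    (image_mulSingle_subset_boundedFactorizations hN hp.ne_zero)
  obtain ⟨i, rfl⟩ := Nat.exists_eq_mulSingle_of_prod_eq_prime hp hd.2
  exact ⟨i, by simpa using (hd.1 i).2, rfl⟩

theorem ncard_boundedFactorizations_of_prime (hN : ∀ i, 1 ≤ N i) (hp : s.Prime) :
    (boundedFactorizations N s).ncard = {i | s ≤ N i}.ncard := by
  rw [boundedFactorizations_of_prime hN hp,
    Set.ncard_image_of_injective _ (Pi.mulSingle_left_injective hp.ne_one)]

theorem ncard_lt_ncard_boundedFactorizations_of_not_prime (hN : ∀ i, 1 ≤ N i) (hs : 1 < s)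
    (hp : ¬s.Prime) (hK : 2 ≤ {i | s ≤ N i}.ncard) :
    {i | s ≤ N i}.ncard < (boundedFactorizations N s).ncard := by
  obtain ⟨a, ⟨b, rfl⟩, ha, has⟩ := Nat.exists_dvd_of_not_prime2 hs hp
  obtain ⟨i, j, hi, hj, hij⟩ := (Set.one_lt_ncard_iff (Set.toFinite _)).mp hK
  have hb : b ≤ a * b := Nat.le_mul_of_pos_left b (by omega)
  set e : ι → ℕ := Pi.mulSingle i a * Pi.mulSingle j b with he
  have hei : e i = a := by simp [he, Pi.mulSingle_eq_of_ne hij]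
  have he_mem : e ∈ boundedFactorizations N (a * b) := by
    refine mem_boundedFactorizations_of_prod_eq hN (by positivity) ?_ ?_
    · simp [he, prod_mul_distrib]
    · intro k hk
      rcases eq_or_ne k i with rfl | hki
      · exact hei ▸ has.le.trans hi
      rcases eq_or_ne k j with rfl | hkj
      · simpa [he, Pi.mulSingle_eq_of_ne hki] using hb.trans hj
      · simp [he, Pi.mulSingle_eq_of_ne hki, Pi.mulSingle_eq_of_ne hkj] at hk
  -- `e` takes the value `a ∉ {1, s}`, which no `Pi.mulSingle k s` does
  have he_new : e ∉ (fun k => Pi.mulSingle k (a * b)) '' {k | a * b ≤ N k} := by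
    rintro ⟨k, -, hk⟩
    have : (Pi.mulSingle k (a * b) : ι → ℕ) i = a := (congrFun hk i).trans hei
    rw [Pi.mulSingle_apply] at this
    split_ifs at this <;> omega
  calc {k | a * b ≤ N k}.ncard
      < (insert e ((fun k => Pi.mulSingle k (a * b)) '' {k | a * b ≤ N k})).ncard := by
        rw [Set.ncard_insert_of_notMem he_new (Set.toFinite _),
          Set.ncard_image_of_injective _ (Pi.mulSingle_left_injective (by omega))]
        omega
    _ ≤ (boundedFactorizations N (a * b)).ncard :=
        Set.ncard_le_ncard
          (Set.insert_subset he_mem (image_mulSingle_subset_boundedFactorizations hN (by omega)))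
          boundedFactorizations_finite

end BoundedFactorizations

theorem stmt19_general (m : ℕ) (N : Fin m → ℕ) (hN : ∀ i, 2 ≤ N i)
    (s : ℕ) (hs : 1 < s)
    (hK : 2 ≤ Nat.card {i : Fin m // s ≤ N i}) :
    Nat.card {d : Fin m → ℕ // (∀ i, 1 ≤ d i ∧ d i ≤ N i) ∧ ∏ i, d i = s} =
      Nat.card {i : Fin m // s ≤ N i} ↔ s.Prime := by
  have hN₁ : ∀ i, 1 ≤ N i := fun i => one_le_two.trans (hN i)
  change (boundedFactorizations N s).ncard = {i | s ≤ N i}.ncard ↔ s.Prime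
  refine ⟨fun hτ => ?_, ncard_boundedFactorizations_of_prime hN₁⟩
  by_contra hp
  exact (ncard_lt_ncard_boundedFactorizations_of_not_prime hN₁ hs hp hK).ne' hτ

/-- with `N₁ ≥ ⋯ ≥ Nₘ ≥ 2`, `s > 1`, and `K = #{i : s ≤ Nᵢ} ≥ 2`,
the number `τ(s)` of tuples `(d₁,…,dₘ)` with `1 ≤ dᵢ ≤ Nᵢ` and `∏ dᵢ = s` equals `K`
if and only if `s` is prime. -/
theorem stmt19 (m : ℕ) (N : Fin m → ℕ) (hN : ∀ i, 2 ≤ N i)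
    (hmono : ∀ i j : Fin m, i ≤ j → N j ≤ N i) (s : ℕ) (hs : 1 < s)
    (hK : 2 ≤ Nat.card {i : Fin m // s ≤ N i}) :
    Nat.card {d : Fin m → ℕ // (∀ i, 1 ≤ d i ∧ d i ≤ N i) ∧ ∏ i, d i = s} =
      Nat.card {i : Fin m // s ≤ N i} ↔ s.Prime :=
  stmt19_general m N hN s hs hK
end
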